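/- arXiv:1010.0715 — 4 statements merged into one kernel-verified Lean document; each statement's English description precedes it below -/
import Mathlib

section
/- Let p ∈ ℂ[z₁,…,z_n] be a polynomial of multidegree at most d = (d₁,…,d_n) with no zeros in the open polydisk 𝔻ⁿ, and let p̃ be its reflection at degree d. Suppose there exist natural numbers N₁,…,N_n and polynomials A_{j,i} ∈ ℂ[z₁,…,z_n] (1 ≤ j ≤ n, 1 ≤ i ≤ N_j) such that for all z ∈ ℂⁿ: |p(z)|² − |p̃(z)|² = Σ_{j=1}^{n} (1−|z_j|²)·Σ_{i=1}^{N_j} |A_{j,i}(z)|². Then for every complex Hilbert space H, every n-tuple T₁,…,T_n of pairwise commuting bounded linear operators on H with ‖T_j‖ < 1 for all j, and every vector h ∈ H, one has ‖p̃(T₁,…,T_n) h‖ ≤ ‖p(T₁,…,T_n) h‖. (This is the von Neumann inequality expressing that p̃/p is in the Schur-Agler class of the polydisk.) -/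
open MvPolynomial

/-- The reflection of a polynomial `p` at multidegree `d`. -/
noncomputable def reflect {k : ℕ} (d : Fin k → ℕ) (p : MvPolynomial (Fin k) ℂ) :
    MvPolynomial (Fin k) ℂ :=
  ∑ α ∈ p.support,
    monomial (Finsupp.equivFunOnFinite.symm fun j => d j - α j) ((starRingEnd ℂ) (coeff α p))

/-- Evaluation of `q(z₁,…,zₙ) = Σ_α c_α z^α` on an `n`-tuple of bounded operators:
`q(T₁,…,Tₙ) = Σ_α c_α T₁^{α₁}⋯Tₙ^{αₙ}` (the product taken in the order `1,…,n`). -/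
noncomputable def opEval {n : ℕ} {H : Type*} [NormedAddCommGroup H] [InnerProductSpace ℂ H]
    (q : MvPolynomial (Fin n) ℂ) (T : Fin n → (H →L[ℂ] H)) : H →L[ℂ] H :=
  ∑ α ∈ q.support, coeff α q • ((List.finRange n).map fun j => T j ^ α j).prod

/-!
Both sides of the decomposition are values at `(z, z̄)` of polynomials in `2n` variables
`(z, w)`, built from the hereditary products `q(z) · r̄(w)`. A polynomial vanishing at every
`(z, z̄)` vanishes identically, so the decomposition is an identity in `ℂ[z, w]`. The hereditary
functional calculus `z^α w^β ↦ ⟪T^β h, T^α h⟫` is linear and sends `q(z) · q̄(w)` to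
`‖q(T) h‖²`, so
`‖p(T) h‖² - ‖p̃(T) h‖² = ∑_{j,i} (‖A_{j,i}(T) h‖² - ‖T_j A_{j,i}(T) h‖²)`,
which is nonnegative because every `T_j` is a contraction.
-/

open ComplexConjugate

namespace MvPolynomial

theorem eq_zero_of_eval_sumElim_conj {σ : Type*} {Q : MvPolynomial (σ ⊕ σ) ℂ}
    (hQ : ∀ z : σ → ℂ, eval (Sum.elim z fun j => conj (z j)) Q = 0) : Q = 0 := by
  -- Substituting `z = x + i y`, `z̄ = x - i y` gives a polynomial vanishing at all real points,
  -- hence zero; the substitution is invertible over `ℂ`.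
  let g : σ ⊕ σ → MvPolynomial (σ ⊕ σ) ℂ :=
    Sum.elim (fun j => X (.inl j) + C Complex.I * X (.inr j))
      (fun j => X (.inl j) - C Complex.I * X (.inr j))
  have eval_aeval_g (x : σ ⊕ σ → ℂ) : eval x (aeval g Q) =
      eval (Sum.elim (fun j => x (.inl j) + Complex.I * x (.inr j))
        (fun j => x (.inl j) - Complex.I * x (.inr j))) Q := by
    rw [aeval_eq_bind₁]
    refine (eval₂Hom_bind₁ _ _ _ _).trans (congrArg (eval · Q) ?_)
    ext (j | j) <;> simp [g]
  have hg : aeval g Q = 0 := by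
    refine funext_set (fun _ => Set.range ((↑) : ℝ → ℂ))
      (fun _ => Set.infinite_range_of_injective Complex.ofReal_injective) fun x hx => ?_
    choose y hy using fun s => hx s trivial
    rw [eval_aeval_g, map_zero, ← hQ fun j => x (.inl j) + Complex.I * x (.inr j)]
    refine congrArg (eval · Q) ?_
    ext (j | j) <;> simp [← hy, Complex.conj_ofReal, sub_eq_add_neg]
  refine funext fun w => ?_
  have := eval_aeval_g (Sum.elim (fun j => (w (.inl j) + w (.inr j)) / 2)
    (fun j => (w (.inl j) - w (.inr j)) / (2 * Complex.I)))
  rw [hg, map_zero] at this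
  rw [map_zero, this]
  refine congrArg (eval · Q) ?_
  ext (j | j) <;> simp only [Sum.elim_inl, Sum.elim_inr] <;> field_simp <;> ring

end MvPolynomial

section OperatorEvaluation

variable {n : ℕ} {H : Type*} [NormedAddCommGroup H] [InnerProductSpace ℂ H]
  (T : Fin n → H →L[ℂ] H)

noncomputable def monomialOp (α : Fin n →₀ ℕ) : H →L[ℂ] H :=
  ((List.finRange n).map fun j => T j ^ α j).prod

theorem opEval_eq_constr (q : MvPolynomial (Fin n) ℂ) :
    opEval q T = (basisMonomials (Fin n) ℂ).constr ℂ (monomialOp T) q := by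
  rw [Module.Basis.constr_apply]
  rfl

theorem opEval_add (q r : MvPolynomial (Fin n) ℂ) :
    opEval (q + r) T = opEval q T + opEval r T := by
  simp only [opEval_eq_constr, map_add]

theorem opEval_monomial (α : Fin n →₀ ℕ) (c : ℂ) :
    opEval (monomial α c) T = c • monomialOp T α := by
  have hα : monomial α c = c • basisMonomials (Fin n) ℂ α := by
    rw [coe_basisMonomials, smul_monomial, smul_eq_mul, mul_one]
  rw [opEval_eq_constr, hα, map_smul, Module.Basis.constr_basis]

theorem opEval_comp_eq_aeval {𝒜 : Type*} [CommSemiring 𝒜] [Algebra ℂ 𝒜]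
    (φ : 𝒜 →ₐ[ℂ] H →L[ℂ] H) (t : Fin n → 𝒜) (q : MvPolynomial (Fin n) ℂ) :
    opEval q (φ ∘ t) = φ (aeval t q) := by
  induction q using MvPolynomial.induction_on' with
  | monomial α c =>
    rw [opEval_monomial, aeval_monomial, map_mul, AlgHom.commutes,
      Algebra.algebraMap_eq_smul_one, smul_mul_assoc, one_mul,
      Finsupp.prod_fintype _ _ fun _ => pow_zero _, Fin.prod_univ_def, map_list_prod, List.map_map]
    simp only [monomialOp, Function.comp_def, map_pow]
  | add q r hq hr => rw [opEval_add, hq, hr, map_add, map_add]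

open scoped IsMulCommutative in
theorem opEval_X_mul (hcomm : ∀ i j, T i * T j = T j * T i) (j : Fin n)
    (q : MvPolynomial (Fin n) ℂ) :
    opEval (X j * q) T = T j * opEval q T := by
  let 𝒜 := Algebra.adjoin ℂ (Set.range T)
  have : IsMulCommutative 𝒜 := Algebra.isMulCommutative_adjoin ℂ <| by
    rintro _ ⟨i, rfl⟩ _ ⟨k, rfl⟩
    exact hcomm i k
  let t : Fin n → 𝒜 := fun i => ⟨T i, Algebra.subset_adjoin ⟨i, rfl⟩⟩
  have hT : T = 𝒜.val ∘ t := rfl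
  rw [hT, opEval_comp_eq_aeval, opEval_comp_eq_aeval, map_mul, aeval_X, map_mul]
  rfl

end OperatorEvaluation

section Hereditary

variable {σ : Type*}

/-- `q(z) · r̄(w)`, where the variables `w = Sum.inr j` stand for `z̄`. -/
noncomputable def hereditaryProd (q r : MvPolynomial σ ℂ) : MvPolynomial (σ ⊕ σ) ℂ :=
  rename Sum.inl q * rename Sum.inr (map (starRingEnd ℂ) r)

theorem eval_hereditaryProd (z : σ → ℂ) (q r : MvPolynomial σ ℂ) :
    eval (Sum.elim z fun j => conj (z j)) (hereditaryProd q r) = eval z q * conj (eval z r) := by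
  rw [hereditaryProd, map_mul, eval_rename, eval_rename, Sum.elim_comp_inl, Sum.elim_comp_inr,
    eval_map]
  congr 1
  exact (eval₂_comp_left (starRingEnd ℂ) (RingHom.id ℂ) z r).symm

theorem eval_hereditaryProd_self (z : σ → ℂ) (q : MvPolynomial σ ℂ) :
    eval (Sum.elim z fun j => conj (z j)) (hereditaryProd q q) = (‖eval z q‖ ^ 2 : ℝ) := by
  rw [eval_hereditaryProd, Complex.mul_conj, Complex.normSq_eq_norm_sq]

theorem hereditaryProd_monomial (α β : σ →₀ ℕ) (c e : ℂ) :
    hereditaryProd (monomial α c) (monomial β e) = monomial (α.sumElim β) (c * conj e) := by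
  rw [hereditaryProd, map_monomial, rename_monomial, rename_monomial, monomial_mul,
    Finsupp.sumElim_eq_add]

end Hereditary

section HereditaryCalculus

variable {n : ℕ} {H : Type*} [NormedAddCommGroup H] [InnerProductSpace ℂ H]
  (T : Fin n → H →L[ℂ] H) (h : H)

/-- The hereditary functional calculus `z^α w^β ↦ ⟪T^β h, T^α h⟫`. -/
noncomputable def hereditaryEval : MvPolynomial (Fin n ⊕ Fin n) ℂ →ₗ[ℂ] ℂ :=
  (basisMonomials _ ℂ).constr ℂ fun γ =>
    inner ℂ (monomialOp T (Finsupp.sumFinsuppEquivProdFinsupp γ).2 h)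
      (monomialOp T (Finsupp.sumFinsuppEquivProdFinsupp γ).1 h)

theorem hereditaryEval_monomial_sumElim (α β : Fin n →₀ ℕ) (c : ℂ) :
    hereditaryEval T h (monomial (α.sumElim β) c) =
      c * inner ℂ (monomialOp T β h) (monomialOp T α h) := by
  have hγ : monomial (α.sumElim β) c = c • basisMonomials _ ℂ (α.sumElim β) := by
    rw [coe_basisMonomials, smul_monomial, smul_eq_mul, mul_one]
  rw [hereditaryEval, hγ, map_smul, Module.Basis.constr_basis, smul_eq_mul]
  simp only [Finsupp.sumFinsuppEquivProdFinsupp_apply, Finsupp.comapDomain_inl_sumElim,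
    Finsupp.comapDomain_inr_sumElim]

theorem hereditaryEval_hereditaryProd (q r : MvPolynomial (Fin n) ℂ) :
    hereditaryEval T h (hereditaryProd q r) = inner ℂ (opEval r T h) (opEval q T h) := by
  induction q using MvPolynomial.induction_on' with
  | add q₁ q₂ hq₁ hq₂ =>
    rw [hereditaryProd, map_add, add_mul, ← hereditaryProd, ← hereditaryProd, map_add, hq₁, hq₂,
      opEval_add, add_apply, inner_add_right]
  | monomial α c =>
    induction r using MvPolynomial.induction_on' with
    | add r₁ r₂ hr₁ hr₂ =>
      rw [hereditaryProd, map_add, map_add, mul_add, ← hereditaryProd, ← hereditaryProd, map_add,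
        hr₁, hr₂, opEval_add, add_apply, inner_add_left]
    | monomial β e =>
      rw [hereditaryProd_monomial, hereditaryEval_monomial_sumElim, opEval_monomial,
        opEval_monomial, smul_apply, smul_apply,
        inner_smul_left, inner_smul_right, mul_left_comm, mul_assoc]

theorem hereditaryEval_hereditaryProd_self (q : MvPolynomial (Fin n) ℂ) :
    hereditaryEval T h (hereditaryProd q q) = (‖opEval q T h‖ ^ 2 : ℝ) := by
  rw [hereditaryEval_hereditaryProd, inner_self_eq_norm_sq_to_K]
  push_cast; rfl

end HereditaryCalculus

theorem sos_decomposition_implies_von_neumann_general (n : ℕ) (d : Fin n → ℕ)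
    (p : MvPolynomial (Fin n) ℂ)
    (N : Fin n → ℕ) (A : (j : Fin n) → Fin (N j) → MvPolynomial (Fin n) ℂ)
    (hsos : ∀ z : Fin n → ℂ,
      ‖eval z p‖ ^ 2 - ‖eval z (reflect d p)‖ ^ 2 =
        ∑ j, (1 - ‖z j‖ ^ 2) * ∑ i, ‖eval z (A j i)‖ ^ 2)
    (H : Type) [NormedAddCommGroup H] [InnerProductSpace ℂ H]
    (T : Fin n → (H →L[ℂ] H))
    (hcomm : ∀ i j, T i * T j = T j * T i)
    (hT : ∀ j, ‖T j‖ < 1) (h : H) :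
    ‖opEval (reflect d p) T h‖ ≤ ‖opEval p T h‖ := by
  have hpoly : hereditaryProd p p - hereditaryProd (reflect d p) (reflect d p) =
      ∑ j, ∑ i, (hereditaryProd (A j i) (A j i) - hereditaryProd (X j * A j i) (X j * A j i)) := by
    rw [← sub_eq_zero]
    refine MvPolynomial.eq_zero_of_eval_sumElim_conj fun z => ?_
    simp only [map_sub, map_sum, eval_hereditaryProd_self, map_mul, eval_X, norm_mul, mul_pow]
    rw [sub_eq_zero]
    exact_mod_cast (hsos z).trans <| by
      simp only [sub_mul, one_mul, Finset.mul_sum, Finset.sum_sub_distrib]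
  have hop : ‖opEval p T h‖ ^ 2 - ‖opEval (reflect d p) T h‖ ^ 2 =
      ∑ j, ∑ i, (‖opEval (A j i) T h‖ ^ 2 - ‖T j (opEval (A j i) T h)‖ ^ 2) := by
    have := congrArg (hereditaryEval T h) hpoly
    simp only [map_sub, map_sum, hereditaryEval_hereditaryProd_self, opEval_X_mul T hcomm,
      mul_apply_eq_comp] at this
    exact_mod_cast this
  have hcontr (j : Fin n) (x : H) : ‖T j x‖ ≤ ‖x‖ := by
    simpa using (T j).le_of_opNorm_le (hT j).le x
  have hnonneg : 0 ≤ ∑ j, ∑ i, (‖opEval (A j i) T h‖ ^ 2 - ‖T j (opEval (A j i) T h)‖ ^ 2) :=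
    Finset.sum_nonneg fun j _ => Finset.sum_nonneg fun i _ =>
      sub_nonneg.2 (pow_le_pow_left₀ (norm_nonneg _) (hcontr j _) 2)
  exact (pow_le_pow_iff_left₀ (norm_nonneg _) (norm_nonneg _) two_ne_zero).1 (by linarith)

/-- One direction of Theorem 1 of the paper: an Agler (sums-of-squares) decomposition of
`|p|² - |p̃|²` implies the von Neumann inequality `‖p̃(T)h‖ ≤ ‖p(T)h‖` for all commuting
tuples of strict contractions, i.e. `p̃/p` is in the Schur–Agler class of the polydisk. -/
theorem sos_decomposition_implies_von_neumann (n : ℕ) (d : Fin n → ℕ)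
    (p : MvPolynomial (Fin n) ℂ)
    (hdeg : ∀ j, p.degreeOf j ≤ d j)
    (hpz : ∀ z : Fin n → ℂ, (∀ j, ‖z j‖ < 1) → eval z p ≠ 0)
    (N : Fin n → ℕ) (A : (j : Fin n) → Fin (N j) → MvPolynomial (Fin n) ℂ)
    (hsos : ∀ z : Fin n → ℂ,
      ‖eval z p‖ ^ 2 - ‖eval z (reflect d p)‖ ^ 2 =
        ∑ j, (1 - ‖z j‖ ^ 2) * ∑ i, ‖eval z (A j i)‖ ^ 2)
    (H : Type) [NormedAddCommGroup H] [InnerProductSpace ℂ H] [CompleteSpace H]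
    (T : Fin n → (H →L[ℂ] H))
    (hcomm : ∀ i j, T i * T j = T j * T i)
    (hT : ∀ j, ‖T j‖ < 1) (h : H) :
    ‖opEval (reflect d p) T h‖ ≤ ‖opEval p T h‖ :=
  sos_decomposition_implies_von_neumann_general n d p N A hsos H T hcomm hT h
end

section
/- Let a, b ∈ ℂ[z₁,z₂] be polynomials of multidegree at most (n,m), and let b̃ be the reflection of b at degree (n,m). Suppose a has no zeros on the closed bidisk cl(𝔻)², and |b(z₁,z₂)| < |a(z₁,z₂)| for all (z₁,z₂) ∈ 𝕋². Then |b̃(z₁,z₂)| < |a(z₁,z₂)| for all (z₁,z₂) ∈ cl(𝔻)²; in particular, for any integers r,s ≥ 0 the polynomial a(z₁,z₂) + z₁^r z₂^s b̃(z₁,z₂) has no zeros on cl(𝔻)². -/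
open MvPolynomial

/-! On the torus `|b̃| = |b|`, so by compactness `|b̃| ≤ c |a|` there for some `c < 1`. Since `a`
has no zeros on the closed bidisk, `b̃ / a` is holomorphic in each variable separately, and the
maximum modulus principle, applied one coordinate at a time, carries this bound from the torus to
the whole closed bidisk. -/

open Metric

theorem IsCompact.exists_lt_one_forall_norm_le_mul {X E F : Type*} [TopologicalSpace X]
    [SeminormedAddCommGroup E] [SeminormedAddCommGroup F] {K : Set X} (hK : IsCompact K)
    {f : X → E} {g : X → F} (hf : ContinuousOn f K) (hg : ContinuousOn g K)
    (hfg : ∀ x ∈ K, ‖f x‖ < ‖g x‖) :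
    ∃ c < 1, ∀ x ∈ K, ‖f x‖ ≤ c * ‖g x‖ := by
  have hg_pos : ∀ x ∈ K, 0 < ‖g x‖ := fun x hx => (norm_nonneg _).trans_lt (hfg x hx)
  rcases K.eq_empty_or_nonempty with rfl | hne
  · exact ⟨0, zero_lt_one, by simp⟩
  have hratio : ContinuousOn (fun x => ‖f x‖ / ‖g x‖) K :=
    hf.norm.div hg.norm fun x hx => (hg_pos x hx).ne'
  obtain ⟨x₀, hx₀, hmax⟩ := hK.exists_isMaxOn hne hratio
  refine ⟨‖f x₀‖ / ‖g x₀‖, (div_lt_one (hg_pos x₀ hx₀)).2 (hfg x₀ hx₀), fun x hx => ?_⟩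
  exact (div_le_iff₀ (hg_pos x hx)).1 (hmax hx)

namespace MvPolynomial

variable {σ : Type*} [DecidableEq σ]

theorem differentiable_eval_update (p : MvPolynomial σ ℂ) (z : σ → ℂ) (j : σ) :
    Differentiable ℂ fun w => eval (Function.update z j w) p := by
  induction p using MvPolynomial.induction_on with
  | C c => simp
  | add p q hp hq => simp only [map_add]; exact hp.add hq
  | mul_X p i hp =>
    simp only [eval_mul, eval_X]
    refine hp.mul ?_
    rcases eq_or_ne i j with rfl | hij
    · simp only [Function.update_self]; exact differentiable_id
    · simp [Function.update_of_ne hij]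

theorem norm_eval_le_mul_of_forall_update {p q : MvPolynomial σ ℂ} {C : ℝ} {z : σ → ℂ} {j : σ}
    (hq : ∀ w : ℂ, ‖w‖ ≤ 1 → eval (Function.update z j w) q ≠ 0)
    (hpq : ∀ w : ℂ, ‖w‖ = 1 →
      ‖eval (Function.update z j w) p‖ ≤ C * ‖eval (Function.update z j w) q‖)
    (hz : ‖z j‖ ≤ 1) :
    ‖eval z p‖ ≤ C * ‖eval z q‖ := by
  set f : ℂ → ℂ := fun w => eval (Function.update z j w) p / eval (Function.update z j w) q
  have hf : DiffContOnCl ℂ f (ball 0 1) := by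
    refine ⟨(p.differentiable_eval_update z j).differentiableOn.div
      (q.differentiable_eval_update z j).differentiableOn fun w hw => hq w ?_, ?_⟩
    · exact (mem_ball_zero_iff.1 hw).le
    · rw [closure_ball 0 one_ne_zero]
      exact (p.differentiable_eval_update z j).continuous.continuousOn.div
        (q.differentiable_eval_update z j).continuous.continuousOn
        fun w hw => hq w (mem_closedBall_zero_iff.1 hw)
  have hfC : ‖f (z j)‖ ≤ C := by
    refine Complex.norm_le_of_forall_mem_frontier_norm_le isBounded_ball hf (fun w hw => ?_) ?_
    · rw [frontier_ball 0 one_ne_zero, mem_sphere_zero_iff_norm] at hw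
      rw [norm_div, div_le_iff₀ (norm_pos_iff.2 (hq w hw.le))]
      exact hpq w hw
    · rwa [closure_ball 0 one_ne_zero, mem_closedBall_zero_iff]
  have hqz : eval z q ≠ 0 := by simpa using hq (z j) hz
  simpa [f, norm_div, div_le_iff₀ (norm_pos_iff.2 hqz)] using hfC

theorem norm_eval_le_mul_of_forall_torus [Fintype σ] {p q : MvPolynomial σ ℂ} {C : ℝ}
    (hq : ∀ z : σ → ℂ, (∀ j, ‖z j‖ ≤ 1) → eval z q ≠ 0)
    (hpq : ∀ z : σ → ℂ, (∀ j, ‖z j‖ = 1) → ‖eval z p‖ ≤ C * ‖eval z q‖)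
    (z : σ → ℂ) (hz : ∀ j, ‖z j‖ ≤ 1) :
    ‖eval z p‖ ≤ C * ‖eval z q‖ := by
  -- release the coordinates in `s` from the torus into the disk, one at a time
  suffices h : ∀ s : Finset σ, ∀ z : σ → ℂ, (∀ j, ‖z j‖ ≤ 1) → (∀ j ∉ s, ‖z j‖ = 1) →
      ‖eval z p‖ ≤ C * ‖eval z q‖ from h Finset.univ z hz (by simp)
  intro s
  induction s using Finset.induction_on with
  | empty => exact fun z _ hz => hpq z fun j => hz j (Finset.notMem_empty j)
  | insert i s _ ih =>
    intro z hz hzs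
    have hupd_le : ∀ w : ℂ, ‖w‖ ≤ 1 → ∀ j, ‖Function.update z i w j‖ ≤ 1 := by
      intro w hw j
      rcases eq_or_ne j i with rfl | hji
      · simpa using hw
      · simpa [Function.update_of_ne hji] using hz j
    refine norm_eval_le_mul_of_forall_update (fun w hw => hq _ (hupd_le w hw))
      (fun w hw => ih _ (hupd_le w hw.le) fun j hj => ?_) (hz i)
    rcases eq_or_ne j i with rfl | hji
    · simpa using hw
    · simpa [Function.update_of_ne hji] using hzs j (by simp [hji, hj])

end MvPolynomial

theorem eval_reflect_of_forall_norm_eq_one {k : ℕ} {d : Fin k → ℕ} {b : MvPolynomial (Fin k) ℂ}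
    (hd : ∀ j, b.degreeOf j ≤ d j) {z : Fin k → ℂ} (hz : ∀ j, ‖z j‖ = 1) :
    eval z (reflect d b) = (∏ j, z j ^ d j) * (starRingEnd ℂ) (eval z b) := by
  have hconj : ∀ j, (starRingEnd ℂ) (z j) = (z j)⁻¹ := fun j => (Complex.inv_eq_conj (hz j)).symm
  rw [reflect, map_sum, eval_eq' z b, map_sum, Finset.mul_sum]
  refine Finset.sum_congr rfl fun α hα => ?_
  rw [eval_monomial, Finsupp.prod_pow, map_mul, mul_left_comm, map_prod, ← Finset.prod_mul_distrib]
  congr 1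
  refine Finset.prod_congr rfl fun j _ => ?_
  rw [map_pow, hconj j, inv_pow, Finsupp.coe_equivFunOnFinite_symm]
  exact pow_sub₀ (z j) (norm_ne_zero_iff.1 ((hz j).trans_ne one_ne_zero))
    ((monomial_le_degreeOf j hα).trans (hd j))

theorem norm_eval_reflect_of_forall_norm_eq_one {k : ℕ} {d : Fin k → ℕ}
    {b : MvPolynomial (Fin k) ℂ} (hd : ∀ j, b.degreeOf j ≤ d j) {z : Fin k → ℂ}
    (hz : ∀ j, ‖z j‖ = 1) :
    ‖eval z (reflect d b)‖ = ‖eval z b‖ := by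
  simp [eval_reflect_of_forall_norm_eq_one hd hz, hz]

theorem reflection_strictly_dominated_general (n m : ℕ) (a b : MvPolynomial (Fin 2) ℂ)
    (hbdeg : ∀ j, b.degreeOf j ≤ ![n, m] j)
    (haz : ∀ z : Fin 2 → ℂ, (∀ j, ‖z j‖ ≤ 1) → eval z a ≠ 0)
    (hba : ∀ z : Fin 2 → ℂ, (∀ j, ‖z j‖ = 1) → ‖eval z b‖ < ‖eval z a‖) :
    (∀ z : Fin 2 → ℂ, (∀ j, ‖z j‖ ≤ 1) →
      ‖eval z (reflect ![n, m] b)‖ < ‖eval z a‖) ∧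
    (∀ r s : ℕ, ∀ z : Fin 2 → ℂ, (∀ j, ‖z j‖ ≤ 1) →
      eval z a + z 0 ^ r * z 1 ^ s * eval z (reflect ![n, m] b) ≠ 0) := by
  have htorus : ∀ z : Fin 2 → ℂ, z ∈ Set.univ.pi (fun _ => sphere 0 1) ↔ ∀ j, ‖z j‖ = 1 := by
    simp
  obtain ⟨c, hc, hbc⟩ := (isCompact_univ_pi fun _ => isCompact_sphere (0 : ℂ) 1)
    |>.exists_lt_one_forall_norm_le_mul (continuous_eval b).continuousOn
      (continuous_eval a).continuousOn fun z hz => hba z ((htorus z).1 hz)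
  have hdom : ∀ z : Fin 2 → ℂ, (∀ j, ‖z j‖ ≤ 1) → ‖eval z (reflect ![n, m] b)‖ < ‖eval z a‖ := by
    intro z hz
    calc ‖eval z (reflect ![n, m] b)‖ ≤ c * ‖eval z a‖ :=
          norm_eval_le_mul_of_forall_torus haz (fun w hw => by
            rw [norm_eval_reflect_of_forall_norm_eq_one hbdeg hw]
            exact hbc w ((htorus w).2 hw)) z hz
      _ < ‖eval z a‖ := mul_lt_of_lt_one_left (norm_pos_iff.2 (haz z hz)) hc
  refine ⟨hdom, fun r s z hz h => (hdom z hz).not_ge ?_⟩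
  have hmono : ‖z 0 ^ r * z 1 ^ s‖ ≤ 1 := by
    rw [norm_mul, norm_pow, norm_pow]
    exact mul_le_one₀ (pow_le_one₀ (norm_nonneg _) (hz 0)) (by positivity)
      (pow_le_one₀ (norm_nonneg _) (hz 1))
  calc ‖eval z a‖ = ‖z 0 ^ r * z 1 ^ s * eval z (reflect ![n, m] b)‖ := by
        rw [eq_neg_of_add_eq_zero_left h, norm_neg]
    _ ≤ ‖eval z (reflect ![n, m] b)‖ := by
        rw [norm_mul]; exact mul_le_of_le_one_left (norm_nonneg _) hmono

/-- If `a` has no zeros on the closed bidisk and `|b| < |a|` on the 2-torus, then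
`|b̃| < |a|` on the whole closed bidisk (where `b̃` is the reflection of `b` at degree
`(n,m)`); in particular `a + z₁ʳz₂ˢ b̃` has no zeros on the closed bidisk. -/
theorem reflection_strictly_dominated (n m : ℕ) (a b : MvPolynomial (Fin 2) ℂ)
    (hadeg : ∀ j, a.degreeOf j ≤ ![n, m] j)
    (hbdeg : ∀ j, b.degreeOf j ≤ ![n, m] j)
    (haz : ∀ z : Fin 2 → ℂ, (∀ j, ‖z j‖ ≤ 1) → eval z a ≠ 0)
    (hba : ∀ z : Fin 2 → ℂ, (∀ j, ‖z j‖ = 1) → ‖eval z b‖ < ‖eval z a‖) :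
    (∀ z : Fin 2 → ℂ, (∀ j, ‖z j‖ ≤ 1) →
      ‖eval z (reflect ![n, m] b)‖ < ‖eval z a‖) ∧
    (∀ r s : ℕ, ∀ z : Fin 2 → ℂ, (∀ j, ‖z j‖ ≤ 1) →
      eval z a + z 0 ^ r * z 1 ^ s * eval z (reflect ![n, m] b) ≠ 0) :=
  reflection_strictly_dominated_general n m a b hbdeg haz hba
end

section
/- Let n, m ≥ 0, r, s ≥ 0 and N ≥ 1 be integers. Let a, b ∈ ℂ[z₁,z₂] have multidegree at most (n,m), with reflections ã, b̃ at degree (n,m). Let E₁,…,E_N ∈ ℂ[z₁,z₂] have multidegree at most (n+r, m+s), with reflections Ẽ₁,…,Ẽ_N at degree (n+r, m+s); write E for the column vector (E₁,…,E_N)ᵗ and Ẽᵗ for the row vector (Ẽ₁,…,Ẽ_N). Assume: (i) a has no zeros on the closed bidisk cl(𝔻)²; (ii) a + z₁^r z₂^s b̃ has no zeros on cl(𝔻)²; (iii) Σ_{i=1}^{N} |E_i(z₁,z₂)|² = |a(z₁,z₂)|² − |b(z₁,z₂)|² for all (z₁,z₂) ∈ 𝕋². Define, for (z₁,z₂) ∈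 𝕋², the (N+1)×(N+1) complex matrix V(z₁,z₂) = (1/a(z₁,z₂)) · [ [ z₁^r z₂^s b̃ , Ẽᵗ ] ; [ E , (E·Ẽᵗ − a·(z₁^r z₂^s ã + b)·I_N)/(a + z₁^r z₂^s b̃) ] ], where all polynomial entries are evaluated at (z₁,z₂) and I_N is the N×N identity matrix. Then V(z₁,z₂) is a unitary matrix for every (z₁,z₂) ∈ 𝕋². -/
open MvPolynomial

/-!
On the torus the reflection at degree `d` is conjugation followed by multiplication with the
unimodular monomial `z^d`. Writing `c = z₁^{n+r} z₂^{m+s}`, `γ = a + c b̄` and `x = E / a`, the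
matrix `V` becomes the bordered rank-one matrix `[[p, t x*], [x, ρ x x* - μ I]]` with
`p = c b̄ / a`, `t = c ā / a`, `ρ = c ā / γ` and `μ = (c ā + b) / γ`. Such a matrix is unitary as
soon as `|p|² + ‖x‖² = 1`, `t p̄ + ρ ‖x‖² = μ`, `|t|² + |ρ|² ‖x‖² = 2 Re (ρ̄ μ)` and `|μ| = 1`,
and these four scalar identities follow from `‖x‖² = 1 - |b / a|²` and `|c| = 1`.
-/

theorem pow_sub_eq_pow_mul_star_pow {R : Type*} [CommMonoid R] [StarMul R] {x : R}
    (hx : x ∈ unitary R) {m n : ℕ} (h : m ≤ n) : x ^ (n - m) = x ^ n * star x ^ m := by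
  rw [← Nat.sub_add_cancel h, pow_add, Nat.add_sub_cancel, mul_assoc, ← mul_pow,
    Unitary.mul_star_self_of_mem hx, one_pow, mul_one]

theorem eval_reflect_of_mem_unitary {k : ℕ} (d : Fin k → ℕ) (p : MvPolynomial (Fin k) ℂ)
    (hdeg : ∀ j, p.degreeOf j ≤ d j) (z : Fin k → ℂ) (hz : ∀ j, z j ∈ unitary ℂ) :
    eval z (reflect d p) = (∏ j, z j ^ d j) * star (eval z p) := by
  rw [reflect, map_sum, eval_eq', star_sum, Finset.mul_sum]
  refine Finset.sum_congr rfl fun α hα => ?_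
  have hαd : ∀ j, α j ≤ d j := fun j => (monomial_le_degreeOf j hα).trans (hdeg j)
  have hmono : ∏ j, z j ^ (d j - α j) = (∏ j, z j ^ d j) * ∏ j, star (z j) ^ α j := by
    rw [← Finset.prod_mul_distrib]
    exact Finset.prod_congr rfl fun j _ => pow_sub_eq_pow_mul_star_pow (hz j) (hαd j)
  rw [eval_monomial, Finsupp.prod_pow, Finsupp.coe_equivFunOnFinite_symm, hmono, star_mul',
    star_prod, starRingEnd_apply]
  simp only [star_pow]
  ring

section BorderedRankOne

variable {R : Type*} [CommRing R] {N : ℕ}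

theorem sum_mul_mul_sub_ite (a x : Fin N → R) (c μ : R) (k : Fin N) :
    ∑ i, a i * (c * x i - μ * if i = k then 1 else 0) = c * ∑ i, a i * x i - μ * a k := by
  simp [mul_sub, Finset.sum_sub_distrib, Finset.mul_sum, mul_left_comm, mul_comm]

theorem sum_mul_sub_ite_mul (a x : Fin N → R) (c μ : R) (k : Fin N) :
    ∑ i, (c * a i - μ * if i = k then 1 else 0) * x i = c * ∑ i, a i * x i - μ * x k := by
  simp [sub_mul, Finset.sum_sub_distrib, Finset.mul_sum, mul_assoc]

variable [StarRing R]

def borderedRankOne (p t ρ μ : R) (x : Fin N → R) : Matrix (Fin (N + 1)) (Fin (N + 1)) R :=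
  Matrix.of <| Fin.cases (Fin.cases p fun k => t * star (x k)) fun i =>
    Fin.cases (x i) fun k => ρ * star (x k) * x i - μ * if i = k then 1 else 0

theorem borderedRankOne_mem_unitaryGroup (p t ρ μ : R) (x : Fin N → R)
    (h₀ : star p * p + ∑ i, star (x i) * x i = 1)
    (h₁ : t * star p + ρ * ∑ i, star (x i) * x i = μ)
    (h₂ : star t * t + star ρ * ρ * ∑ i, star (x i) * x i = star ρ * μ + star μ * ρ)
    (hμ : star μ * μ = 1) :
    borderedRankOne p t ρ μ x ∈ Matrix.unitaryGroup (Fin (N + 1)) R := by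
  rw [Matrix.mem_unitaryGroup_iff']
  ext j k
  cases j using Fin.cases <;> cases k using Fin.cases <;>
    simp only [Matrix.mul_apply, Fin.sum_univ_succ, borderedRankOne, Matrix.one_apply,
      Matrix.star_apply, Matrix.of_apply, Fin.cases_zero, Fin.cases_succ, Fin.succ_ne_zero,
      Fin.succ_inj, fun k => (Fin.succ_ne_zero k).symm, if_false, star_sub, star_mul', star_star,
      apply_ite star, star_one, star_zero, sum_mul_mul_sub_ite, sum_mul_sub_ite_mul]
  · simpa using h₀
  · linear_combination star (x _) * h₁
  · have hs : star (∑ i, star (x i) * x i) = ∑ i, star (x i) * x i := by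
      simp only [star_sum, star_mul', star_star, mul_comm]
    have h₁' := congrArg star h₁
    simp only [star_add, star_mul', star_star, hs] at h₁'
    linear_combination x _ * h₁'
  · rename_i j k
    obtain rfl | hjk := eq_or_ne j k
    · simp only [if_true]
      linear_combination x j * star (x j) * h₂ + hμ
    · simp only [hjk, hjk.symm, if_false]
      linear_combination x j * star (x k) * h₂

end BorderedRankOne

theorem lurking_isometry_mem_unitaryGroup {𝕜 : Type*} [Field 𝕜] [StarRing 𝕜] {N : ℕ}
    (A B A' B' w u : 𝕜) (e e' : Fin N → 𝕜) (hw : w ∈ unitary 𝕜) (hu : u ∈ unitary 𝕜)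
    (hA' : A' = u * star A) (hB' : B' = u * star B) (he' : ∀ i, e' i = w * u * star (e i))
    (hA : A ≠ 0) (hγ : A + w * B' ≠ 0)
    (hS : ∑ i, star (e i) * e i = star A * A - star B * B) :
    (Matrix.of fun i k : Fin (N + 1) =>
      A⁻¹ *
        if hi : i = 0 then
          if hk : k = 0 then w * B' else e' (k.pred hk)
        else
          if hk : k = 0 then e (i.pred hi)
          else
            (e (i.pred hi) * e' (k.pred hk) - A * (w * A' + B) * (if i = k then 1 else 0)) /
              (A + w * B'))
      ∈ Matrix.unitaryGroup (Fin (N + 1)) 𝕜 := by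
  subst hA' hB'
  obtain rfl : e' = fun i => w * u * star (e i) := funext he'
  have hw₀ : w ≠ 0 := left_ne_zero_of_mul_eq_one (Unitary.mul_star_self_of_mem hw)
  have hu₀ : u ≠ 0 := left_ne_zero_of_mul_eq_one (Unitary.mul_star_self_of_mem hu)
  have hw' : star w = w⁻¹ := eq_inv_of_mul_eq_one_left (Unitary.star_mul_self_of_mem hw)
  have hu' : star u = u⁻¹ := eq_inv_of_mul_eq_one_left (Unitary.star_mul_self_of_mem hu)
  have hA_star : star A ≠ 0 := star_ne_zero.mpr hA
  have hs : ∑ i, star (e i) / star A * (e i / A) = (star A * A - star B * B) / (star A * A) := by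
    simp only [div_mul_div_comm, ← Finset.sum_div, hS]
  -- `γ` stays opaque until `field_simp` has cleared the denominators `γ` and `star γ`.
  set γ := A + w * (u * star B) with hγ_def
  have hγ_star : star γ ≠ 0 := star_ne_zero.mpr hγ
  convert borderedRankOne_mem_unitaryGroup (w * u * star B / A) (w * u * star A / A)
    (w * u * star A / γ) ((w * (u * star A) + B) / γ) (fun i => e i / A) ?_ ?_ ?_ ?_ using 1
  · ext i k
    cases i using Fin.cases <;> cases k using Fin.cases <;>
      simp only [borderedRankOne, Matrix.of_apply, Fin.cases_zero, Fin.cases_succ, dite_true,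
        Fin.succ_ne_zero, dite_false, Fin.pred_succ, Fin.succ_inj, star_div₀]
    all_goals field_simp
  all_goals
    simp only [star_div₀, star_mul', star_add, star_star, hs]
    field_simp
    simp only [hγ_def, hw', hu', star_add, star_mul', star_star]
    field_simp <;> ring

theorem lurking_isometry_matrix_unitary_general (n m r s N : ℕ)
    (a b : MvPolynomial (Fin 2) ℂ)
    (hadeg : ∀ j, a.degreeOf j ≤ ![n, m] j)
    (hbdeg : ∀ j, b.degreeOf j ≤ ![n, m] j)
    (E : Fin N → MvPolynomial (Fin 2) ℂ)
    (hEdeg : ∀ i j, (E i).degreeOf j ≤ ![n + r, m + s] j)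
    (haz : ∀ z : Fin 2 → ℂ, (∀ j, ‖z j‖ ≤ 1) → eval z a ≠ 0)
    (habz : ∀ z : Fin 2 → ℂ, (∀ j, ‖z j‖ ≤ 1) →
      eval z a + z 0 ^ r * z 1 ^ s * eval z (reflect ![n, m] b) ≠ 0)
    (hsos : ∀ z : Fin 2 → ℂ, (∀ j, ‖z j‖ = 1) →
      ∑ i, ‖eval z (E i)‖ ^ 2 = ‖eval z a‖ ^ 2 - ‖eval z b‖ ^ 2)
    (z : Fin 2 → ℂ) (hz : ∀ j, ‖z j‖ = 1) :
    (Matrix.of fun i k : Fin (N + 1) =>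
      (eval z a)⁻¹ *
        if hi : i = 0 then
          if hk : k = 0 then
            z 0 ^ r * z 1 ^ s * eval z (reflect ![n, m] b)
          else
            eval z (reflect ![n + r, m + s] (E (k.pred hk)))
        else
          if hk : k = 0 then
            eval z (E (i.pred hi))
          else
            (eval z (E (i.pred hi)) * eval z (reflect ![n + r, m + s] (E (k.pred hk)))
                - eval z a *
                    (z 0 ^ r * z 1 ^ s * eval z (reflect ![n, m] a) + eval z b) *
                    (if i = k then 1 else 0)) /
              (eval z a + z 0 ^ r * z 1 ^ s * eval z (reflect ![n, m] b)))
      ∈ Matrix.unitaryGroup (Fin (N + 1)) ℂ := by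
  have hzu : ∀ j, z j ∈ unitary ℂ := fun j =>
    Unitary.mem_iff_star_mul_self.mpr (by rw [Complex.star_def, Complex.conj_mul', hz j]; norm_num)
  have hdisk : ∀ j, ‖z j‖ ≤ 1 := fun j => (hz j).le
  have eval_reflect : ∀ (p q : ℕ) (f : MvPolynomial (Fin 2) ℂ), (∀ j, f.degreeOf j ≤ ![p, q] j) →
      eval z (reflect ![p, q] f) = z 0 ^ p * z 1 ^ q * star (eval z f) := fun p q f hf => by
    rw [eval_reflect_of_mem_unitary _ f hf z hzu, Fin.prod_univ_two]
    rfl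
  have hS : ∑ i, star (eval z (E i)) * eval z (E i)
      = star (eval z a) * eval z a - star (eval z b) * eval z b := by
    simp only [Complex.star_def, Complex.conj_mul']
    exact_mod_cast hsos z hz
  exact lurking_isometry_mem_unitaryGroup _ _ _ _ _ (z 0 ^ n * z 1 ^ m) (fun i => eval z (E i))
    (fun i => eval z (reflect ![n + r, m + s] (E i)))
    (mul_mem (pow_mem (hzu 0) r) (pow_mem (hzu 1) s))
    (mul_mem (pow_mem (hzu 0) n) (pow_mem (hzu 1) m))
    (eval_reflect n m a hadeg) (eval_reflect n m b hbdeg)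
    (fun i => by rw [eval_reflect _ _ _ (hEdeg i)]; ring) (haz z hdisk) (habz z hdisk) hS

/-- The Claim of the paper: the `(N+1)×(N+1)` matrix
`V = (1/a) [ z₁ʳz₂ˢ b̃ , Ẽᵗ ; E , (EẼᵗ − a(z₁ʳz₂ˢ ã + b)I)/(a + z₁ʳz₂ˢ b̃) ]`
is unitary at every point of the 2-torus, under the hypotheses that `a` and
`a + z₁ʳz₂ˢ b̃` have no zeros on the closed bidisk and `‖E‖² = |a|² − |b|²` on the torus. -/
theorem lurking_isometry_matrix_unitary (n m r s N : ℕ) (hN : 1 ≤ N)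
    (a b : MvPolynomial (Fin 2) ℂ)
    (hadeg : ∀ j, a.degreeOf j ≤ ![n, m] j)
    (hbdeg : ∀ j, b.degreeOf j ≤ ![n, m] j)
    (E : Fin N → MvPolynomial (Fin 2) ℂ)
    (hEdeg : ∀ i j, (E i).degreeOf j ≤ ![n + r, m + s] j)
    (haz : ∀ z : Fin 2 → ℂ, (∀ j, ‖z j‖ ≤ 1) → eval z a ≠ 0)
    (habz : ∀ z : Fin 2 → ℂ, (∀ j, ‖z j‖ ≤ 1) →
      eval z a + z 0 ^ r * z 1 ^ s * eval z (reflect ![n, m] b) ≠ 0)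
    (hsos : ∀ z : Fin 2 → ℂ, (∀ j, ‖z j‖ = 1) →
      ∑ i, ‖eval z (E i)‖ ^ 2 = ‖eval z a‖ ^ 2 - ‖eval z b‖ ^ 2)
    (z : Fin 2 → ℂ) (hz : ∀ j, ‖z j‖ = 1) :
    (Matrix.of fun i k : Fin (N + 1) =>
      (eval z a)⁻¹ *
        if hi : i = 0 then
          if hk : k = 0 then
            z 0 ^ r * z 1 ^ s * eval z (reflect ![n, m] b)
          else
            eval z (reflect ![n + r, m + s] (E (k.pred hk)))
        else
          if hk : k = 0 then
            eval z (E (i.pred hi))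
          else
            (eval z (E (i.pred hi)) * eval z (reflect ![n + r, m + s] (E (k.pred hk)))
                - eval z a *
                    (z 0 ^ r * z 1 ^ s * eval z (reflect ![n, m] a) + eval z b) *
                    (if i = k then 1 else 0)) /
              (eval z a + z 0 ^ r * z 1 ^ s * eval z (reflect ![n, m] b)))
      ∈ Matrix.unitaryGroup (Fin (N + 1)) ℂ :=
  lurking_isometry_matrix_unitary_general n m r s N a b hadeg hbdeg E hEdeg haz habz hsos z hz
end

section
/- Let p ∈ ℂ[z₁,…,z_n] be a polynomial of multidegree at most d = (d₁,…,d_n) with no zeros in the open polydisk 𝔻ⁿ, and let p̃ be its reflection at degree d. Then |p̃(z)| = |p(z)| for every z ∈ 𝕋ⁿ, and |p̃(z)| ≤ |p(z)| for every z ∈ 𝔻ⁿ. (Hence the rational function p̃/p is inner on the polydisk: it has modulus one on the n-torus and modulus at most one on 𝔻ⁿ.) -/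
open MvPolynomial

/-!
Everything rests on the identity `|1 - conj a * b|² = |b - a|² + (1 - |a|²)(1 - |b|²)`.

On the torus `conj z_j = z_j⁻¹`, so `p̃(z) = z^d · conj (p z)`. Inside the polydisk, fix `z` and
compose `p` with the disk automorphisms `μ ↦ (μ + z_j) / (1 + conj z_j · μ)`, clearing
denominators. This gives a one-variable polynomial `P` of degree at most `D = ∑ d_j` without
zeros in the disk and with `P 0 = p z`; the same construction applied to `p̃` gives the
reflection `Q` of `P` at degree `D`, with `Q 0 = p̃ z`. Writing `P = c ∏ (μ - r)` over its `m`
roots, all with `|r| ≥ 1`, we get `Q = conj c · μ^(D - m) ∏ (1 - conj r · μ)`, and the identity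
bounds each factor of `Q` by the corresponding factor of `P` on the disk.
-/

open ComplexConjugate

namespace Complex

theorem normSq_one_sub_conj_mul (a b : ℂ) :
    normSq (1 - conj a * b) = normSq (b - a) + (1 - normSq a) * (1 - normSq b) := by
  simp only [normSq_apply, sub_re, sub_im, mul_re, mul_im, one_re, one_im, conj_re, conj_im]
  ring

theorem norm_sub_lt_norm_one_sub_conj_mul {a b : ℂ} (ha : ‖a‖ < 1) (hb : ‖b‖ < 1) :
    ‖b - a‖ < ‖1 - conj a * b‖ := by
  rw [← sq_lt_sq₀ (norm_nonneg _) (norm_nonneg _), Complex.sq_norm, Complex.sq_norm,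
    normSq_one_sub_conj_mul, lt_add_iff_pos_right, normSq_eq_norm_sq, normSq_eq_norm_sq]
  exact mul_pos (sub_pos.mpr (pow_lt_one₀ (norm_nonneg a) ha two_ne_zero))
    (sub_pos.mpr (pow_lt_one₀ (norm_nonneg b) hb two_ne_zero))

theorem norm_one_sub_conj_mul_le_norm_sub {a b : ℂ} (ha : ‖a‖ ≤ 1) (hb : 1 ≤ ‖b‖) :
    ‖1 - conj a * b‖ ≤ ‖b - a‖ := by
  rw [← sq_le_sq₀ (norm_nonneg _) (norm_nonneg _), Complex.sq_norm, Complex.sq_norm,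
    normSq_one_sub_conj_mul, add_le_iff_nonpos_right, normSq_eq_norm_sq, normSq_eq_norm_sq]
  exact mul_nonpos_of_nonneg_of_nonpos (sub_nonneg.mpr (pow_le_one₀ (norm_nonneg a) ha))
    (sub_nonpos.mpr (one_le_pow₀ hb))

end Complex

namespace Polynomial

open Complex Filter Topology

theorem norm_pow_mul_conj_eval_inv_le {P : ℂ[X]} {D : ℕ} (hdeg : P.natDegree ≤ D)
    (hroots : ∀ r ∈ P.roots, 1 ≤ ‖r‖) {μ : ℂ} (hμ0 : μ ≠ 0) (hμ : ‖μ‖ ≤ 1) :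
    ‖μ ^ D * conj (P.eval (conj μ)⁻¹)‖ ≤ ‖P.eval μ‖ := by
  have hsplit := IsAlgClosed.splits P
  have hm : Multiset.card P.roots ≤ D := (card_roots' P).trans hdeg
  have hnorm (f : ℂ → ℂ) : ‖(P.roots.map f).prod‖ = (P.roots.map fun r => ‖f r‖).prod := by
    simpa [Multiset.map_map] using map_multiset_prod (normHom : ℂ →*₀ ℝ) (P.roots.map f)
  have hfactor (r : ℂ) : ‖μ‖ * ‖(conj μ)⁻¹ - r‖ = ‖1 - conj μ * r‖ := by
    rw [← norm_conj μ, ← norm_mul, mul_sub, mul_inv_cancel₀ (by simpa using hμ0)]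
  rw [hsplit.eval_eq_prod_roots, hsplit.eval_eq_prod_roots]
  calc _ = ‖P.leadingCoeff‖ * (‖μ‖ ^ (D - Multiset.card P.roots) *
        (P.roots.map fun r => ‖μ‖ * ‖(conj μ)⁻¹ - r‖).prod) := by
        rw [norm_mul, norm_pow, norm_conj, norm_mul, hnorm, Multiset.prod_map_mul,
          Multiset.map_const', Multiset.prod_replicate, ← Nat.sub_add_cancel hm, pow_add,
          Nat.add_sub_cancel]
        ring
    _ ≤ ‖P.leadingCoeff‖ * (1 * (P.roots.map fun r => ‖μ - r‖).prod) := by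
        refine mul_le_mul_of_nonneg_left (mul_le_mul (pow_le_one₀ (norm_nonneg μ) hμ) ?_
          (Multiset.prod_map_nonneg fun _ _ => by positivity) zero_le_one) (norm_nonneg _)
        refine Multiset.prod_map_le_prod_map₀ _ _ (fun _ _ => by positivity) fun r hr => ?_
        rw [hfactor, norm_sub_rev μ]
        exact norm_one_sub_conj_mul_le_norm_sub hμ (hroots r hr)
    _ = _ := by rw [one_mul, norm_mul, hnorm]

theorem norm_eval_le_of_eval_eq_pow_mul_conj {P Q : ℂ[X]} {D : ℕ} (hdeg : P.natDegree ≤ D)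
    (hP : ∀ μ : ℂ, ‖μ‖ < 1 → P.eval μ ≠ 0)
    (hQ : ∀ μ : ℂ, μ ≠ 0 → Q.eval μ = μ ^ D * conj (P.eval (conj μ)⁻¹))
    {μ : ℂ} (hμ : ‖μ‖ < 1) : ‖Q.eval μ‖ ≤ ‖P.eval μ‖ := by
  have hroots (r : ℂ) (hr : r ∈ P.roots) : 1 ≤ ‖r‖ :=
    not_lt.mp fun h => hP r h (isRoot_of_mem_roots hr)
  have hpunct (ν : ℂ) (hν0 : ν ≠ 0) (hν : ‖ν‖ < 1) : ‖Q.eval ν‖ ≤ ‖P.eval ν‖ :=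
    (hQ ν hν0).symm ▸ norm_pow_mul_conj_eval_inv_le hdeg hroots hν0 hν.le
  rcases eq_or_ne μ 0 with rfl | hμ0
  -- `hQ` says nothing at `0`; pass to the limit along the punctured disk.
  · have hlim (R : ℂ[X]) : Tendsto (fun ν => ‖R.eval ν‖) (𝓝[≠] 0) (𝓝 ‖R.eval 0‖) :=
      (R.continuous.norm.tendsto 0).mono_left nhdsWithin_le_nhds
    refine le_of_tendsto_of_tendsto (hlim Q) (hlim P) ?_
    filter_upwards [self_mem_nhdsWithin,
      nhdsWithin_le_nhds (Metric.ball_mem_nhds (0 : ℂ) one_pos)] with ν hν0 hν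
    exact hpunct ν hν0 (by simpa using hν)
  · exact hpunct μ hμ0 hμ

end Polynomial

namespace MvPolynomial

section HomEval

variable {σ K A : Type*} [Fintype σ] [CommSemiring K] [CommSemiring A] [Algebra K A]

/-- `∏ j, v j ^ d j * p (u / v)`, written so that it makes sense without dividing: the
homogenization of `p` at multidegree `d`, evaluated at `(u, v)`. -/
noncomputable def homEval (d : σ → ℕ) (u v : σ → A) : MvPolynomial σ K →ₗ[K] A :=
  Finsupp.linearCombination K (fun α : σ →₀ ℕ => ∏ j, u j ^ α j * v j ^ (d j - α j))
    ∘ₗ (AddMonoidAlgebra.coeffLinearEquiv K).toLinearMap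

variable {d : σ → ℕ} {u v : σ → A} {p : MvPolynomial σ K}

theorem homEval_monomial (α : σ →₀ ℕ) (c : K) :
    homEval d u v (monomial α c) = c • ∏ j, u j ^ α j * v j ^ (d j - α j) :=
  Finsupp.linearCombination_single _ _ _

theorem homEval_apply :
    homEval d u v p = ∑ α ∈ p.support, coeff α p • ∏ j, u j ^ α j * v j ^ (d j - α j) :=
  Finsupp.linearCombination_apply _ _

theorem homEval_one : homEval d u 1 p = aeval u p := by
  simp [homEval_apply, aeval_def, eval₂_eq', Algebra.smul_def]

theorem map_homEval {B : Type*} [CommSemiring B] [Algebra K B] (f : A →ₐ[K] B) :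
    f (homEval d u v p) = homEval d (f ∘ u) (f ∘ v) p := by
  simp [homEval_apply, map_sum, map_prod]

theorem homEval_mul_mul (hdeg : ∀ j, p.degreeOf j ≤ d j) (t : σ → A) :
    homEval d (t * u) (t * v) p = (∏ j, t j ^ d j) * homEval d u v p := by
  rw [homEval_apply, homEval_apply, Finset.mul_sum]
  refine Finset.sum_congr rfl fun α hα => ?_
  rw [mul_smul_comm, ← Finset.prod_mul_distrib]
  congr 1
  refine Finset.prod_congr rfl fun j _ => ?_
  have hαd : α j ≤ d j := (monomial_le_degreeOf j hα).trans (hdeg j)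
  calc (t j * u j) ^ α j * (t j * v j) ^ (d j - α j)
      = t j ^ (α j + (d j - α j)) * (u j ^ α j * v j ^ (d j - α j)) := by ring
    _ = t j ^ d j * (u j ^ α j * v j ^ (d j - α j)) := by rw [Nat.add_sub_cancel' hαd]

theorem natDegree_homEval_le {u v : σ → Polynomial K} (hdeg : ∀ j, p.degreeOf j ≤ d j)
    (hu : ∀ j, (u j).natDegree ≤ 1) (hv : ∀ j, (v j).natDegree ≤ 1) :
    (homEval d u v p).natDegree ≤ ∑ j, d j := by
  rw [homEval_apply]
  refine Polynomial.natDegree_sum_le_of_forall_le _ _ fun α hα => ?_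
  refine (Polynomial.natDegree_smul_le _ _).trans <| (Polynomial.natDegree_prod_le _ _).trans <|
    Finset.sum_le_sum fun j _ => ?_
  have hαd : α j ≤ d j := (monomial_le_degreeOf j hα).trans (hdeg j)
  calc _ ≤ α j * 1 + (d j - α j) * 1 :=
        Polynomial.natDegree_mul_le.trans <| add_le_add
          (Polynomial.natDegree_pow_le.trans (Nat.mul_le_mul_left _ (hu j)))
          (Polynomial.natDegree_pow_le.trans (Nat.mul_le_mul_left _ (hv j)))
    _ = d j := by omega

end HomEval

theorem homEval_eq_prod_mul_eval {σ K : Type*} [Fintype σ] [Field K] {d : σ → ℕ}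
    {p : MvPolynomial σ K} (hdeg : ∀ j, p.degreeOf j ≤ d j) {u v : σ → K} (hv : ∀ j, v j ≠ 0) :
    homEval d u v p = (∏ j, v j ^ d j) * eval (u / v) p := by
  have huv : u = v * (u / v) := by ext j; exact (mul_div_cancel₀ _ (hv j)).symm
  calc homEval d u v p = homEval d (v * (u / v)) (v * 1) p := by rw [mul_one, ← huv]
    _ = _ := by rw [homEval_mul_mul hdeg, homEval_one, aeval_eq_eval]

theorem homEval_reflect {k : ℕ} {d : Fin k → ℕ} {p : MvPolynomial (Fin k) ℂ}
    (hdeg : ∀ j, p.degreeOf j ≤ d j) (u v : Fin k → ℂ) :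
    homEval d u v (reflect d p) = conj (homEval d (conj v) (conj u) p) := by
  rw [reflect, map_sum, homEval_apply, map_sum]
  refine Finset.sum_congr rfl fun α hα => ?_
  rw [homEval_monomial, smul_eq_mul, smul_eq_mul, map_mul, map_prod]
  congr 1
  refine Finset.prod_congr rfl fun j _ => ?_
  have hαd : α j ≤ d j := (monomial_le_degreeOf j hα).trans (hdeg j)
  simp [Nat.sub_sub_self hαd, mul_comm]

section MobiusSlice

variable {σ : Type*} [Fintype σ] {d : σ → ℕ} {z : σ → ℂ} {p : MvPolynomial σ ℂ}

/-- `p` composed with the disk automorphisms `μ ↦ (μ + z j) / (1 + conj (z j) * μ)`, multiplied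
by the denominators `(1 + conj (z j) * μ) ^ d j`. -/
noncomputable def mobiusSlice (d : σ → ℕ) (z : σ → ℂ) : MvPolynomial σ ℂ →ₗ[ℂ] Polynomial ℂ :=
  homEval d (fun j => Polynomial.X + Polynomial.C (z j))
    (fun j => Polynomial.C (conj (z j)) * Polynomial.X + 1)

theorem eval_mobiusSlice (μ : ℂ) :
    (mobiusSlice d z p).eval μ = homEval d (fun j => μ + z j) (fun j => conj (z j) * μ + 1) p := by
  rw [← Polynomial.coe_aeval_eq_eval, mobiusSlice, map_homEval]
  simp [Function.comp_def]

theorem mobiusSlice_eval_zero : (mobiusSlice d z p).eval 0 = eval z p := by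
  simp [eval_mobiusSlice, ← Pi.one_def, homEval_one]

theorem natDegree_mobiusSlice_le (hdeg : ∀ j, p.degreeOf j ≤ d j) :
    (mobiusSlice d z p).natDegree ≤ ∑ j, d j :=
  natDegree_homEval_le hdeg (fun _ => by compute_degree) (fun _ => by compute_degree)

theorem mobiusSlice_eval_ne_zero (hdeg : ∀ j, p.degreeOf j ≤ d j)
    (hpz : ∀ w : σ → ℂ, (∀ j, ‖w j‖ < 1) → eval w p ≠ 0) (hz : ∀ j, ‖z j‖ < 1)
    {μ : ℂ} (hμ : ‖μ‖ < 1) : (mobiusSlice d z p).eval μ ≠ 0 := by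
  have hmob (j : σ) : ‖μ + z j‖ < ‖conj (z j) * μ + 1‖ := by
    simpa [add_comm] using
      Complex.norm_sub_lt_norm_one_sub_conj_mul (a := -z j) (by simpa using hz j) hμ
  have hv (j : σ) : conj (z j) * μ + 1 ≠ 0 := norm_pos_iff.mp ((norm_nonneg _).trans_lt (hmob j))
  rw [eval_mobiusSlice, homEval_eq_prod_mul_eval hdeg hv]
  refine mul_ne_zero (Finset.prod_ne_zero_iff.mpr fun j _ => pow_ne_zero _ (hv j))
    (hpz _ fun j => ?_)
  rw [Pi.div_apply, norm_div, div_lt_one ((norm_nonneg _).trans_lt (hmob j))]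
  exact hmob j

end MobiusSlice

variable {k : ℕ} {d : Fin k → ℕ} {p : MvPolynomial (Fin k) ℂ} {z : Fin k → ℂ}

theorem eval_mobiusSlice_reflect (hdeg : ∀ j, p.degreeOf j ≤ d j) {μ : ℂ} (hμ0 : μ ≠ 0) :
    (mobiusSlice d z (reflect d p)).eval μ =
      μ ^ (∑ j, d j) * conj ((mobiusSlice d z p).eval (conj μ)⁻¹) := by
  have hμ0' : conj μ ≠ 0 := by simpa using hμ0
  have hu : (conj fun j => conj (z j) * μ + 1) =
      (fun _ => conj μ) * fun j => (conj μ)⁻¹ + z j := by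
    ext j
    simp only [Pi.conj_apply, Pi.mul_apply, map_add, map_one, map_mul, Complex.conj_conj]
    field_simp
    ring
  have hv : (conj fun j => μ + z j) =
      (fun _ => conj μ) * fun j => conj (z j) * (conj μ)⁻¹ + 1 := by
    ext j
    simp only [Pi.conj_apply, Pi.mul_apply, map_add]
    field_simp
    ring
  rw [eval_mobiusSlice, eval_mobiusSlice, homEval_reflect hdeg, hu, hv, homEval_mul_mul hdeg,
    Finset.prod_pow_eq_pow_sum, map_mul, map_pow, Complex.conj_conj]

theorem norm_eval_reflect_of_norm_eq_one (hdeg : ∀ j, p.degreeOf j ≤ d j)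
    (hz : ∀ j, ‖z j‖ = 1) : ‖eval z (reflect d p)‖ = ‖eval z p‖ := by
  have hz0 (j : Fin k) : conj z j ≠ 0 := by simp [← norm_pos_iff, hz j]
  have hinv : 1 / conj z = z := by
    ext j
    rw [Pi.div_apply, Pi.one_apply, Pi.conj_apply, one_div, inv_eq_of_mul_eq_one_right]
    rw [Complex.conj_mul', hz j, Complex.ofReal_one, one_pow]
  calc ‖eval z (reflect d p)‖ = ‖homEval d 1 (conj z) p‖ := by
        rw [← aeval_eq_eval, ← homEval_one, homEval_reflect hdeg, map_one, Complex.norm_conj]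
    _ = ‖eval z p‖ := by
        rw [homEval_eq_prod_mul_eval (v := conj z) hdeg hz0, hinv, norm_mul, norm_prod]
        simp [hz]

theorem norm_eval_reflect_le_of_norm_lt_one (hdeg : ∀ j, p.degreeOf j ≤ d j)
    (hpz : ∀ w : Fin k → ℂ, (∀ j, ‖w j‖ < 1) → eval w p ≠ 0) (hz : ∀ j, ‖z j‖ < 1) :
    ‖eval z (reflect d p)‖ ≤ ‖eval z p‖ := by
  simpa only [mobiusSlice_eval_zero] using
    Polynomial.norm_eval_le_of_eval_eq_pow_mul_conj (natDegree_mobiusSlice_le hdeg)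
      (fun _ => mobiusSlice_eval_ne_zero hdeg hpz hz) (fun _ => eval_mobiusSlice_reflect hdeg)
      (μ := 0) (by simp)

end MvPolynomial

/-- If `p ∈ ℂ[z₁,…,zₙ]` has multidegree at most `d` and no zeros in the open polydisk, and
`p̃` is its reflection at degree `d`, then `|p̃| = |p|` on the `n`-torus and `|p̃| ≤ |p|` on
the open polydisk; i.e. `p̃/p` is a rational inner function. -/
theorem reflection_quotient_inner (n : ℕ) (d : Fin n → ℕ) (p : MvPolynomial (Fin n) ℂ)
    (hdeg : ∀ j, p.degreeOf j ≤ d j)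
    (hpz : ∀ z : Fin n → ℂ, (∀ j, ‖z j‖ < 1) → eval z p ≠ 0) :
    (∀ z : Fin n → ℂ, (∀ j, ‖z j‖ = 1) →
      ‖eval z (reflect d p)‖ = ‖eval z p‖) ∧
    (∀ z : Fin n → ℂ, (∀ j, ‖z j‖ < 1) →
      ‖eval z (reflect d p)‖ ≤ ‖eval z p‖) :=
  ⟨fun _ hz => norm_eval_reflect_of_norm_eq_one hdeg hz,
    fun _ hz => norm_eval_reflect_le_of_norm_lt_one hdeg hpz hz⟩
end
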